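/- arXiv:0802.0165 — 3 statements merged into one kernel-verified Lean document; each statement's English description precedes it below -/
import Mathlib

section
/- In the setting of an elliptic basis, for k and l distinct and nonzero in ℤ/dℤ, the product formula ω_k·ω_l = ξ₀ + Γ_{-k,-l}·ω_k + Γ_{k,l}·ω_l + ν_k + ν_l + a₂ holds, where ξ₀ = x_O(b), ν_k = x_O(kt), and Γ_{k,l} = Γ(O,kt,lt). -/
/-!
Put `P = b`, `A = kt`, `B = lt`. Then `ω_k`, `ω_l`, `Γ_{-k,-l}` and `Γ_{k,l}` are the slopes of the
lines through `P, -A`, through `P, -B`, through `-B, A` and through `B, -A`. As `d` kills every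
multiple of `t` but not `b`, the point `P` is affine and has an `x`-coordinate different from those
of `A` and `B`; the points `A ≠ B` are affine too, and when `B = -A` the two `Γ`s become tangent
slopes. After clearing denominators, the product formula is a linear combination of the
Weierstrass equations satisfied by `P`, `A` and `B`.
-/

noncomputable section
namespace EllipticPeriods

variable {F : Type*} [Field F]

/-- x-coordinate of an affine point, with junk value 0 at the point at infinity. -/
def xc {W : WeierstrassCurve.Affine F} : W.Point → F
  | .zero => 0
  | @WeierstrassCurve.Affine.Point.some _ _ _ x _ _ => x

/-- y-coordinate of an affine point, with junk value 0 at the point at infinity. -/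
def yc {W : WeierstrassCurve.Affine F} : W.Point → F
  | .zero => 0
  | @WeierstrassCurve.Affine.Point.some _ _ _ _ y _ => y

open Classical in
/-- The function `u_{A,B} = (y_A - y(A-B))/(x_A - x(A-B))`, evaluated at `P`: this is the
slope of the line (secant, or tangent in the degenerate case) through the points
`P - A` and `A - B` of the curve. -/
def uf (W : WeierstrassCurve.Affine F) (A B P : W.Point) : F :=
  W.slope (xc (P - A)) (xc (A - B)) (yc (P - A)) (yc (A - B))

/-- `Γ(A,B,C) = u_{A,B}(C)`. -/
def Gam (W : WeierstrassCurve.Affine F) (A B C : W.Point) : F := uf W A B C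

open WeierstrassCurve.Affine

section ZModNsmul

variable {G : Type*} [AddGroup G] {d : ℕ} [NeZero d] {t : G}

theorem val_nsmul_eq_val_nsmul_iff (ht : addOrderOf t = d) {i j : ZMod d} :
    i.val • t = j.val • t ↔ i = j := by
  rw [nsmul_eq_nsmul_iff_modEq, ht, ← ZMod.natCast_eq_natCast_iff, ZMod.natCast_zmod_val,
    ZMod.natCast_zmod_val]

theorem val_nsmul_eq_zero_iff (ht : addOrderOf t = d) {i : ZMod d} : i.val • t = 0 ↔ i = 0 := by
  simpa using val_nsmul_eq_val_nsmul_iff ht (j := 0)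

theorem neg_val_nsmul (ht : addOrderOf t = d) (i : ZMod d) : (-i).val • t = -(i.val • t) := by
  refine eq_neg_of_add_eq_zero_left ?_
  rw [← add_nsmul, ← addOrderOf_dvd_iff_nsmul_eq_zero, ht, ← ZMod.natCast_eq_zero_iff]
  push_cast [ZMod.natCast_zmod_val]
  exact neg_add_cancel i

end ZModNsmul

@[simp] lemma xc_some {W : WeierstrassCurve.Affine F} {x y : F} (h : W.Nonsingular x y) :
    xc (Point.some _ _ h) = x := rfl

@[simp] lemma yc_some {W : WeierstrassCurve.Affine F} {x y : F} (h : W.Nonsingular x y) :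
    yc (Point.some _ _ h) = y := rfl

open Classical in
theorem slope_mul_slope (W : WeierstrassCurve.Affine F) {x₀ x₁ x₂ y₀ y₁ y₂ : F}
    (h₀ : W.Equation x₀ y₀) (h₁ : W.Equation x₁ y₁) (h₂ : W.Equation x₂ y₂)
    (h₀₁ : x₀ ≠ x₁) (h₀₂ : x₀ ≠ x₂) (h₁₂ : ¬(x₁ = x₂ ∧ y₁ = y₂)) :
    W.slope x₀ x₁ y₀ (W.negY x₁ y₁) * W.slope x₀ x₂ y₀ (W.negY x₂ y₂) =
      x₀ + W.slope x₂ x₁ (W.negY x₂ y₂) y₁ * W.slope x₀ x₁ y₀ (W.negY x₁ y₁) +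
        W.slope x₂ x₁ y₂ (W.negY x₁ y₁) * W.slope x₀ x₂ y₀ (W.negY x₂ y₂) + x₁ + x₂ + W.a₂ := by
  have e₀ := (W.equation_iff x₀ y₀).mp h₀
  have e₁ := (W.equation_iff x₁ y₁).mp h₁
  have e₂ := (W.equation_iff x₂ y₂).mp h₂
  have d₀₁ : x₀ - x₁ ≠ 0 := sub_ne_zero.mpr h₀₁
  by_cases hx : x₁ = x₂
  · -- `(x₂, y₂)` is the negative of `(x₁, y₁)`, so two of the slopes are tangent slopes
    subst hx
    obtain rfl : y₂ = W.negY x₁ y₁ :=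
      (Y_eq_of_X_eq h₂ h₁ rfl).resolve_left fun hy ↦ h₁₂ ⟨rfl, hy.symm⟩
    have hy : y₁ ≠ W.negY x₁ y₁ := fun hy ↦ h₁₂ ⟨rfl, hy⟩
    have hy' : W.negY x₁ y₁ ≠ W.negY x₁ (W.negY x₁ y₁) := by
      rw [negY_negY]; exact hy.symm
    rw [negY_negY, slope_of_X_ne h₀₁, slope_of_X_ne h₀₁, slope_of_Y_ne rfl hy,
      slope_of_Y_ne rfl hy', negY_negY]
    have d : y₁ - W.negY x₁ y₁ ≠ 0 := sub_ne_zero.mpr hy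
    field_simp
    simp only [negY]
    linear_combination (-(2 * y₁ + W.a₁ * x₁ + W.a₃) ^ 2) * (e₀ - e₁)
  · rw [slope_of_X_ne h₀₁, slope_of_X_ne h₀₂, slope_of_X_ne (Ne.symm hx),
      slope_of_X_ne (Ne.symm hx)]
    have d₀₂ : x₀ - x₂ ≠ 0 := sub_ne_zero.mpr h₀₂
    have d₂₁ : x₂ - x₁ ≠ 0 := sub_ne_zero.mpr (Ne.symm hx)
    field_simp
    simp only [negY]
    linear_combination (-1 : F) * ((x₁ - x₂) * e₀ + (x₂ - x₀) * e₁ + (x₀ - x₁) * e₂)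

open Classical in
theorem uf_zero_mul_uf_zero {W : WeierstrassCurve.Affine F} {P A B : W.Point}
    (hP : P ≠ 0) (hA : A ≠ 0) (hB : B ≠ 0) (hPA : P ≠ A) (hPA' : P ≠ -A) (hPB : P ≠ B)
    (hPB' : P ≠ -B) (hAB : A ≠ B) :
    uf W 0 A P * uf W 0 B P =
      xc P + Gam W 0 (-A) (-B) * uf W 0 A P + Gam W 0 A B * uf W 0 B P + xc A + xc B + W.a₂ := by
  rcases P with _ | @⟨x₀, y₀, h₀⟩
  · exact absurd rfl hP
  rcases A with _ | @⟨x₁, y₁, h₁⟩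
  · exact absurd rfl hA
  rcases B with _ | @⟨x₂, y₂, h₂⟩
  · exact absurd rfl hB
  simp only [Gam, uf, sub_zero, zero_sub, Point.neg_some, xc_some, yc_some, negY_negY]
  refine slope_mul_slope W h₀.1 h₁.1 h₂.1 (fun hx ↦ (Point.X_eq_iff.mp hx).elim hPA hPA')
    (fun hx ↦ (Point.X_eq_iff.mp hx).elim hPB hPB') ?_
  rintro ⟨rfl, rfl⟩
  exact hAB rfl

open Classical in
theorem omega_mul_general {L : Type*} [Field L]
    (d : ℕ) (hd : 2 ≤ d)
    (W : WeierstrassCurve.Affine L)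
    (t : W.Point) (ht : addOrderOf t = d)
    (b : W.Point) (hbd : d • b ≠ 0)
    (ω : ZMod d → L)
    (hω : ∀ k : ZMod d, ω k = if k = 0 then 1 else uf W 0 (k.val • t) b) :
    ∀ k l : ZMod d, k ≠ 0 → l ≠ 0 → k ≠ l →
      ω k * ω l =
        xc b + Gam W 0 ((-k).val • t) ((-l).val • t) * ω k +
          Gam W 0 (k.val • t) (l.val • t) * ω l +
          xc (k.val • t) + xc (l.val • t) + W.a₂ := by
  intro k l hk hl hkl
  have : NeZero d := ⟨by omega⟩
  have hdt (j : ZMod d) : d • (j.val • t) = 0 := by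
    rw [smul_comm, show d • t = 0 from ht ▸ addOrderOf_nsmul_eq_zero t, smul_zero]
  have hb_ne (s : W.Point) (hs : d • s = 0) : b ≠ s := fun h ↦ hbd (h ▸ hs)
  have hb_ne_neg (j : ZMod d) : b ≠ -(j.val • t) := hb_ne _ (by rw [smul_neg, hdt, neg_zero])
  rw [hω k, hω l, if_neg hk, if_neg hl, neg_val_nsmul ht, neg_val_nsmul ht]
  exact uf_zero_mul_uf_zero (hb_ne 0 (smul_zero d)) ((val_nsmul_eq_zero_iff ht).not.mpr hk)
    ((val_nsmul_eq_zero_iff ht).not.mpr hl) (hb_ne _ (hdt k)) (hb_ne_neg k) (hb_ne _ (hdt l))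
    (hb_ne_neg l) ((val_nsmul_eq_val_nsmul_iff ht).not.mpr hkl)

open Classical in
/-- the product formula in the elliptic basis, for distinct nonzero
`k, l ∈ ℤ/dℤ`: `ω_k·ω_l = ξ₀ + Γ_{-k,-l}·ω_k + Γ_{k,l}·ω_l + ν_k + ν_l + a₂`, where
`ξ₀ = x_O(b) = x(b)`, `ν_k = x_O(kt) = x(kt)` and `Γ_{k,l} = Γ(O,kt,lt)`. -/
theorem omega_mul {K L : Type*} [Field K] [Fintype K] [Field L] [Algebra K L]
    (d : ℕ) (hd : 2 ≤ d) (hrank : Module.finrank K L = d)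
    (W : WeierstrassCurve.Affine L)
    (hW : W.a₁ ^ Fintype.card K = W.a₁ ∧ W.a₂ ^ Fintype.card K = W.a₂ ∧
      W.a₃ ^ Fintype.card K = W.a₃ ∧ W.a₄ ^ Fintype.card K = W.a₄ ∧
      W.a₆ ^ Fintype.card K = W.a₆)
    (φ : W.Point → W.Point)
    (hφ : ∀ P : W.Point, xc (φ P) = xc P ^ Fintype.card K ∧
      yc (φ P) = yc P ^ Fintype.card K ∧ (φ P = 0 ↔ P = 0))
    (t : W.Point) (ht : addOrderOf t = d) (htK : φ t = t)
    (b : W.Point) (hb : φ b = b + t) (hbd : d • b ≠ 0)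
    (ω : ZMod d → L)
    (hω : ∀ k : ZMod d, ω k = if k = 0 then 1 else uf W 0 (k.val • t) b) :
    ∀ k l : ZMod d, k ≠ 0 → l ≠ 0 → k ≠ l →
      ω k * ω l =
        xc b + Gam W 0 ((-k).val • t) ((-l).val • t) * ω k +
          Gam W 0 (k.val • t) (l.val • t) * ω l +
          xc (k.val • t) + xc (l.val • t) + W.a₂ :=
  omega_mul_general d hd W t ht b hbd ω hω

end EllipticPeriods
end
end

section
/- In the setting of an elliptic basis, for any nonzero k ∈ ℤ/dℤ, one has ω_k² = ξ₀ - a₁·ω_k + ξ_k + ν_k + a₂, where ξ_k = x_{kt}(b) and ν_k = x_O(kt). -/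
noncomputable section
namespace EllipticPeriods

variable {F : Type*} [Field F]

section

open Classical

variable {W : WeierstrassCurve.Affine F}

lemma xc_neg (P : W.Point) : xc (-P) = xc P := by
  cases P <;> rfl

lemma xc_add {P Q : W.Point} (hP : P ≠ 0) (hQ : Q ≠ 0) (hPQ : P + Q ≠ 0) :
    xc (P + Q) = W.addX (xc P) (xc Q) (W.slope (xc P) (xc Q) (yc P) (yc Q)) := by
  cases P with
  | zero => exact absurd rfl hP
  | @some x₁ y₁ h₁ =>
    cases Q with
    | zero => exact absurd rfl hQ
    | @some x₂ y₂ h₂ =>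
      by_cases hxy : x₁ = x₂ ∧ y₁ = W.negY x₂ y₂
      · exact absurd (WeierstrassCurve.Affine.Point.add_of_Y_eq hxy.1 hxy.2) hPQ
      · rw [WeierstrassCurve.Affine.Point.add_some hxy]; rfl

lemma uf_zero_left (B P : W.Point) :
    uf W 0 B P = W.slope (xc P) (xc B) (yc P) (yc (-B)) := by
  rw [uf, sub_zero, zero_sub, xc_neg]

-- `u_{O,B}(P)` is the slope of the chord through `P` and `-B`: this is the addition law for `P + -B`.
lemma uf_zero_left_sq {B P : W.Point} (hP : P ≠ 0) (hB : B ≠ 0) (hPB : P ≠ B) :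
    uf W 0 B P ^ 2 = xc P - W.a₁ * uf W 0 B P + xc (P - B) + xc B + W.a₂ := by
  have h := xc_add (Q := -B) hP (neg_ne_zero.2 hB) (by rwa [← sub_eq_add_neg, sub_ne_zero])
  rw [← sub_eq_add_neg, xc_neg] at h
  rw [uf_zero_left, h, WeierstrassCurve.Affine.addX]
  ring

end

open Classical in
theorem omega_sq_general {L : Type*} [Field L]
    (d : ℕ)
    (W : WeierstrassCurve.Affine L)
    (t : W.Point) (ht : addOrderOf t = d)
    (b : W.Point) (hbd : d • b ≠ 0)
    (ω : ZMod d → L)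
    (hω : ∀ k : ZMod d, ω k = if k = 0 then 1 else uf W 0 (k.val • t) b) :
    ∀ k : ZMod d, k ≠ 0 →
      ω k ^ 2 =
        xc b - W.a₁ * ω k + xc (b - k.val • t) + xc (k.val • t) + W.a₂ := by
  intro k hk
  have : NeZero d := ⟨by rintro rfl; exact hbd (zero_smul ℕ b)⟩
  have hkt : k.val • t ≠ 0 :=
    nsmul_ne_zero_of_lt_addOrderOf ((ZMod.val_ne_zero k).2 hk) (ht ▸ k.val_lt)
  have hb : b ≠ 0 := by rintro rfl; exact hbd (nsmul_zero d)
  have hdt : d • t = 0 := ht ▸ addOrderOf_nsmul_eq_zero t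
  have hbkt : b ≠ k.val • t := by
    rintro rfl
    exact hbd (by rw [smul_comm, hdt, smul_zero])
  rw [hω, if_neg hk]
  exact uf_zero_left_sq hb hkt hbkt

open Classical in
/-- for nonzero `k ∈ ℤ/dℤ`, `ω_k² = ξ₀ - a₁·ω_k + ξ_k + ν_k + a₂`,
where `ξ_k = x_{kt}(b) = x(b - kt)` and `ν_k = x_O(kt) = x(kt)`. -/
theorem omega_sq {K L : Type*} [Field K] [Fintype K] [Field L] [Algebra K L]
    (d : ℕ) (hd : 2 ≤ d) (hrank : Module.finrank K L = d)
    (W : WeierstrassCurve.Affine L)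
    (hW : W.a₁ ^ Fintype.card K = W.a₁ ∧ W.a₂ ^ Fintype.card K = W.a₂ ∧
      W.a₃ ^ Fintype.card K = W.a₃ ∧ W.a₄ ^ Fintype.card K = W.a₄ ∧
      W.a₆ ^ Fintype.card K = W.a₆)
    (φ : W.Point → W.Point)
    (hφ : ∀ P : W.Point, xc (φ P) = xc P ^ Fintype.card K ∧
      yc (φ P) = yc P ^ Fintype.card K ∧ (φ P = 0 ↔ P = 0))
    (t : W.Point) (ht : addOrderOf t = d) (htK : φ t = t)
    (b : W.Point) (hb : φ b = b + t) (hbd : d • b ≠ 0)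
    (ω : ZMod d → L)
    (hω : ∀ k : ZMod d, ω k = if k = 0 then 1 else uf W 0 (k.val • t) b) :
    ∀ k : ZMod d, k ≠ 0 →
      ω k ^ 2 =
        xc b - W.a₁ * ω k + xc (b - k.val • t) + xc (k.val • t) + W.a₂ :=
  omega_sq_general d W t ht b hbd ω hω

end EllipticPeriods
end
end

section
/- For k, l distinct and nonzero in ℤ/dℤ, the constant Γ_{k,l} = Γ(O, kt, lt) satisfies the twelve symmetry relations: Γ_{k,l} = Γ_{-l,-k} = Γ_{k,k-l} = Γ_{l-k,-k} = Γ_{l-k,l} = Γ_{-l,k-l}, and Γ_{l,k} = Γ_{-k,-l} = Γ_{k-l,k} = Γ_{-k,l-k} = Γ_{l,l-k} = Γ_{k-l,-l}, together with Γ_{k,l} = -Γ_{l,k} - a₁ (all indices taken mod d, and only for those index pairs where both indices are distinct and nonzero). -/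
/-! With `P = l • t`, `Q = -(k • t)` and `R = (k - l) • t` we have `P + Q + R = 0`, and
`Γ_{k,l}` is the slope of the line through `P` and `Q`. Since the slope of a line is determined
by any two of its three points on the curve, the six index pairs in each block of relations are
the six ordered pairs from one such collinear triple. Negating all points turns a slope `λ` into
`-λ - a₁`, which gives `Γ_{k,l} = -Γ_{l,k} - a₁`. -/

noncomputable section
namespace EllipticPeriods

variable {F : Type*} [Field F]

section Cyclic

variable {G : Type*} [AddCommGroup G] {t : G} {d : ℕ}

lemma nsmul_eq_nsmul_iff_natCast_eq (ht : addOrderOf t = d) {m n : ℕ} :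
    m • t = n • t ↔ (m : ZMod d) = n := by
  rw [nsmul_eq_nsmul_iff_modEq, ht, ZMod.natCast_eq_natCast_iff]

variable [NeZero d]

def valNsmulHom (ht : addOrderOf t = d) : ZMod d →+ G :=
  AddMonoidHom.mk' (fun a => a.val • t) fun a b => by
    rw [← add_nsmul, nsmul_eq_nsmul_iff_natCast_eq ht]
    push_cast
    simp only [ZMod.natCast_zmod_val]

lemma valNsmulHom_apply (ht : addOrderOf t = d) (a : ZMod d) : valNsmulHom ht a = a.val • t :=
  rfl

lemma valNsmulHom_eq_zero_iff (ht : addOrderOf t = d) {a : ZMod d} :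
    valNsmulHom ht a = 0 ↔ a = 0 := by
  rw [valNsmulHom_apply, ← zero_nsmul t, nsmul_eq_nsmul_iff_natCast_eq ht, ZMod.natCast_zmod_val,
    Nat.cast_zero]

end Cyclic

open WeierstrassCurve.Affine

section Slope

variable {W : WeierstrassCurve.Affine F}

lemma xc_eq_xc_iff {P Q : W.Point} (hP : P ≠ 0) (hQ : Q ≠ 0) :
    xc P = xc Q ↔ P = Q ∨ P = -Q := by
  rcases P with _ | @⟨_, _, h₁⟩
  · exact absurd rfl hP
  rcases Q with _ | @⟨_, _, h₂⟩
  · exact absurd rfl hQ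
  exact Point.X_eq_iff

variable [DecidableEq F]

lemma slope_comm {x₁ x₂ y₁ y₂ : F} (h₁ : W.Equation x₁ y₁) (h₂ : W.Equation x₂ y₂) :
    W.slope x₁ x₂ y₁ y₂ = W.slope x₂ x₁ y₂ y₁ := by
  by_cases hx : x₁ = x₂
  · by_cases hy : y₁ = W.negY x₂ y₂
    · rw [slope_of_Y_eq hx hy, slope_of_Y_eq hx.symm (by rw [hy, hx, negY_negY])]
    · obtain rfl := hx
      obtain rfl := Y_eq_of_Y_ne h₁ h₂ rfl hy
      rfl
  · rw [slope_of_X_ne hx, slope_of_X_ne (Ne.symm hx), ← neg_sub y₁, ← neg_sub x₁, neg_div_neg_eq]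

lemma slope_negY_negY {x₁ x₂ y₁ y₂ : F} (h₁ : W.Equation x₁ y₁) (h₂ : W.Equation x₂ y₂)
    (hxy : ¬(x₁ = x₂ ∧ y₁ = W.negY x₂ y₂)) :
    W.slope x₁ x₂ (W.negY x₁ y₁) (W.negY x₂ y₂) = -W.slope x₁ x₂ y₁ y₂ - W.a₁ := by
  by_cases hx : x₁ = x₂
  · have hy : y₁ ≠ W.negY x₂ y₂ := fun hy => hxy ⟨hx, hy⟩
    obtain rfl := hx
    obtain rfl := Y_eq_of_Y_ne h₁ h₂ rfl hy
    have hy' : W.negY x₁ y₁ ≠ W.negY x₁ (W.negY x₁ y₁) := by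
      rw [negY_negY]; exact Ne.symm hy
    rw [slope_of_Y_ne rfl hy', slope_of_Y_ne rfl hy, negY_negY, ← neg_sub y₁, div_neg]
    field_simp
    simp only [negY]
    ring
  · rw [slope_of_X_ne hx, slope_of_X_ne hx]
    field_simp [sub_ne_zero.mpr hx]
    simp only [negY]
    ring

variable (W) in
/-- Slope of the line through `P` and `Q` (the tangent if `P = Q`), with junk value `0` when that
line is vertical or one of the points is `0`. -/
def pointSlope (P Q : W.Point) : F :=
  W.slope (xc P) (xc Q) (yc P) (yc Q)

lemma pointSlope_comm {P Q : W.Point} (hP : P ≠ 0) (hQ : Q ≠ 0) :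
    pointSlope W P Q = pointSlope W Q P := by
  rcases P with _ | @⟨_, _, h₁⟩
  · exact absurd rfl hP
  rcases Q with _ | @⟨_, _, h₂⟩
  · exact absurd rfl hQ
  exact slope_comm h₁.1 h₂.1

lemma pointSlope_neg_neg {P Q : W.Point} (hP : P ≠ 0) (hQ : Q ≠ 0) (hPQ : P + Q ≠ 0) :
    pointSlope W (-P) (-Q) = -pointSlope W P Q - W.a₁ := by
  rcases P with _ | @⟨_, _, h₁⟩
  · exact absurd rfl hP
  rcases Q with _ | @⟨_, _, h₂⟩
  · exact absurd rfl hQ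
  exact slope_negY_negY h₁.1 h₂.1 fun hxy => hPQ (Point.add_of_Y_eq hxy.1 hxy.2)

lemma pointSlope_eq_of_add_add_eq_zero_of_xc_ne {P Q R : W.Point} (h : P + Q + R = 0)
    (hP : P ≠ 0) (hQ : Q ≠ 0) (hR : R ≠ 0) (hx : xc R ≠ xc P) :
    pointSlope W P R = pointSlope W P Q := by
  obtain rfl : R = -(P + Q) := eq_neg_of_add_eq_zero_right h
  rcases P with _ | @⟨x₁, y₁, h₁⟩
  · exact absurd rfl hP
  rcases Q with _ | @⟨x₂, y₂, h₂⟩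
  · exact absurd rfl hQ
  have hxy : ¬(x₁ = x₂ ∧ y₁ = W.negY x₂ y₂) := fun hxy =>
    hR (by rw [Point.add_of_Y_eq hxy.1 hxy.2, neg_zero])
  rw [Point.add_some hxy, Point.neg_some] at hx ⊢
  simp only [pointSlope, xc, yc, addY, negY_negY] at hx ⊢
  rw [slope_of_X_ne (Ne.symm hx), div_eq_iff (sub_ne_zero.mpr (Ne.symm hx)), negAddY]
  ring

lemma pointSlope_eq_of_add_add_eq_zero {P Q R : W.Point} (h : P + Q + R = 0)
    (hP : P ≠ 0) (hQ : Q ≠ 0) (hR : R ≠ 0) : pointSlope W P R = pointSlope W P Q := by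
  by_cases hx : xc R = xc P
  · rcases (xc_eq_xc_iff hR hP).mp hx with rfl | rfl
    · by_cases hQR : Q = R
      · rw [hQR]
      -- here `P = R`: the line is the tangent at `R`, whose third point is `Q`
      refine (pointSlope_eq_of_add_add_eq_zero_of_xc_ne (by rw [← h]; abel) hR hR hQ ?_).symm
      intro hxQ
      rcases (xc_eq_xc_iff hQ hR).mp hxQ with hQR' | rfl
      · exact hQR hQR'
      · exact hR (by simpa using h)
    · exact absurd (by simpa using h) hQ
  · exact pointSlope_eq_of_add_add_eq_zero_of_xc_ne h hP hQ hR hx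

lemma pointSlope_perm_eq_of_add_add_eq_zero {P Q R : W.Point} (h : P + Q + R = 0)
    (hP : P ≠ 0) (hQ : Q ≠ 0) (hR : R ≠ 0) :
    pointSlope W P Q = pointSlope W Q P ∧ pointSlope W P Q = pointSlope W R Q ∧
      pointSlope W P Q = pointSlope W Q R ∧ pointSlope W P Q = pointSlope W P R ∧
      pointSlope W P Q = pointSlope W R P := by
  have hPR : pointSlope W P R = pointSlope W P Q := pointSlope_eq_of_add_add_eq_zero h hP hQ hR
  have hQR : pointSlope W Q R = pointSlope W Q P :=
    pointSlope_eq_of_add_add_eq_zero (by rw [← h]; abel) hQ hP hR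
  rw [pointSlope_comm hR hP, pointSlope_comm hR hQ, hPR, hQR, pointSlope_comm hQ hP]
  exact ⟨rfl, rfl, rfl, rfl, rfl⟩

end Slope

open Classical in
lemma Gam_zero_left (W : WeierstrassCurve.Affine F) (B C : W.Point) :
    Gam W 0 B C = pointSlope W C (-B) := by
  simp only [Gam, uf, pointSlope, sub_zero, zero_sub]

open Classical in
theorem Gamma_kl_symmetries_general {K : Type*} [Field K]
    (W : WeierstrassCurve.Affine K) (d : ℕ) (hd : 2 ≤ d)
    (t : W.Point) (ht : addOrderOf t = d)
    (G : ZMod d → ZMod d → K)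
    (hG : ∀ k l : ZMod d, G k l = Gam W 0 (k.val • t) (l.val • t)) :
    ∀ k l : ZMod d, k ≠ 0 → l ≠ 0 → k ≠ l →
      (G k l = G (-l) (-k) ∧ G k l = G k (k - l) ∧ G k l = G (l - k) (-k) ∧
        G k l = G (l - k) l ∧ G k l = G (-l) (k - l)) ∧
      (G l k = G (-k) (-l) ∧ G l k = G (k - l) k ∧ G l k = G (-k) (l - k) ∧
        G l k = G l (l - k) ∧ G l k = G (k - l) (-l)) ∧
      G k l = -G l k - W.a₁ := by
  have : NeZero d := ⟨by omega⟩
  set φ := valNsmulHom ht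
  have hG' (a b : ZMod d) : G a b = pointSlope W (φ b) (-φ a) := by
    rw [hG, Gam_zero_left, valNsmulHom_apply, valNsmulHom_apply]
  have hφ {a : ZMod d} (ha : a ≠ 0) : φ a ≠ 0 := (valNsmulHom_eq_zero_iff ht).not.mpr ha
  have hφsub {a b : ZMod d} (hab : a ≠ b) : φ a - φ b ≠ 0 := by
    rw [← map_sub]; exact hφ (sub_ne_zero.mpr hab)
  have collinear (k l : ZMod d) (hk : k ≠ 0) (hl : l ≠ 0) (hkl : k ≠ l) :
      G k l = G (-l) (-k) ∧ G k l = G k (k - l) ∧ G k l = G (l - k) (-k) ∧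
        G k l = G (l - k) l ∧ G k l = G (-l) (k - l) := by
    simp only [hG', map_neg, map_sub, neg_neg, neg_sub]
    exact pointSlope_perm_eq_of_add_add_eq_zero (by abel) (hφ hl) (neg_ne_zero.mpr (hφ hk))
      (hφsub hkl)
  intro k l hk hl hkl
  refine ⟨collinear k l hk hl hkl, ?_, ?_⟩
  · obtain ⟨h₁, h₂, h₃, h₄, h₅⟩ := collinear l k hl hk hkl.symm
    exact ⟨h₁, h₄, h₅, h₂, h₃⟩
  · have hneg := pointSlope_neg_neg (neg_ne_zero.mpr (hφ hk)) (hφ hl)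
      (by rw [neg_add_eq_sub]; exact hφsub hkl.symm)
    rw [neg_neg] at hneg
    rw [hG', hG', hneg, pointSlope_comm (hφ hl) (neg_ne_zero.mpr (hφ hk))]
    ring

open Classical in
/-- the twelve symmetry relations for `Γ_{k,l} = Γ(O, kt, lt)`,
for `k, l` distinct and nonzero in `ℤ/dℤ` (all occurring index pairs are then
automatically distinct and nonzero), together with `Γ_{k,l} = -Γ_{l,k} - a₁`. -/
theorem Gamma_kl_symmetries {K : Type*} [Field K] [Fintype K]
    (W : WeierstrassCurve.Affine K) (d : ℕ) (hd : 2 ≤ d)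
    (t : W.Point) (ht : addOrderOf t = d)
    (G : ZMod d → ZMod d → K)
    (hG : ∀ k l : ZMod d, G k l = Gam W 0 (k.val • t) (l.val • t)) :
    ∀ k l : ZMod d, k ≠ 0 → l ≠ 0 → k ≠ l →
      (G k l = G (-l) (-k) ∧ G k l = G k (k - l) ∧ G k l = G (l - k) (-k) ∧
        G k l = G (l - k) l ∧ G k l = G (-l) (k - l)) ∧
      (G l k = G (-k) (-l) ∧ G l k = G (k - l) k ∧ G l k = G (-k) (l - k) ∧
        G l k = G l (l - k) ∧ G l k = G (k - l) (-l)) ∧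
      G k l = -G l k - W.a₁ :=
  Gamma_kl_symmetries_general W d hd t ht G hG

end EllipticPeriods
end
end
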